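/- Let 𝒰 be a Unique Games instance over alphabet [Q] on a finite multigraph G=(V,E) with no isolated vertices, and let L,L' be reals with 1 ≤ L ≤ L'. Then for every seed s∈V and every seed label a∈[Q], Amb_{L'}(s,a) ≥ Amb_L(s,a); consequently μ^{UG}_{L'}(s) ≥ μ^{UG}_L(s). -/

import Mathlib

open scoped Classical

noncomputable section

/-- Degree of a vertex in a finite multigraph given by endpoint maps (with multiplicity). -/
def mdeg {V E : Type} [Fintype E] [DecidableEq V] (fste snde : E → V) (v : V) : ℕ :=
  (Finset.univ.filter (fun e => fste e = v)).card +
    (Finset.univ.filter (fun e => snde e = v)).card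

/-- The label-lifted lazy walk on `V × [Q]` (constraints stored oriented `fste → snde`). -/
def ugWalk {V E : Type} [Fintype V] [Fintype E] [DecidableEq V] {Q : ℕ}
    (fste snde : E → V) (perm : E → Equiv.Perm (Fin Q)) :
    Matrix (V × Fin Q) (V × Fin Q) ℝ :=
  Matrix.of fun p q =>
    (if q = p then (1 / 2 : ℝ) else 0) +
    ((Finset.univ.filter (fun e =>
        (fste e = p.1 ∧ snde e = q.1 ∧ perm e p.2 = q.2) ∨
        (snde e = p.1 ∧ fste e = q.1 ∧ (perm e)⁻¹ p.2 = q.2))).card : ℝ) /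
      (2 * (mdeg fste snde p.1 : ℝ))

/-- The geometric (Personalized PageRank) kernel at scale `L`. -/
def ugPr {V E : Type} [Fintype V] [Fintype E] [DecidableEq V] {Q : ℕ}
    (fste snde : E → V) (perm : E → Equiv.Perm (Fin Q)) (L : ℝ)
    (p q : V × Fin Q) : ℝ :=
  ∑' t : ℕ, (1 / (L + 1)) * (L / (L + 1)) ^ t * (ugWalk fste snde perm ^ t) p q

/-- Ambiguity of seed label `a` at seed `s` and scale `L`. -/
def ugAmb {V E : Type} [Fintype V] [Fintype E] [DecidableEq V] {Q : ℕ}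
    (fste snde : E → V) (perm : E → Equiv.Perm (Fin Q)) (L : ℝ) (s : V) (a : Fin Q) : ℝ :=
  ∑ v : V, ((∑ b : Fin Q, ugPr fste snde perm L (s, a) (v, b)) -
    ⨆ b : Fin Q, ugPr fste snde perm L (s, a) (v, b))

/-- `μ^{UG}_L(s) = min_{a∈[Q]} Amb_L(s,a)`. -/
def ugMu {V E : Type} [Fintype V] [Fintype E] [DecidableEq V] {Q : ℕ}
    (fste snde : E → V) (perm : E → Equiv.Perm (Fin Q)) (L : ℝ) (s : V) : ℝ :=
  ⨅ a : Fin Q, ugAmb fste snde perm L s a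

/-!
Write `x_L` for the row `(s, a)` of `pr_L` and `Φ x = ∑ v, max_b x (v, b)` (`fiberSupSum`).
Rows of `pr_L` sum to one, so `Amb_L(s, a) = 1 - Φ x_L`, and it suffices to show
`Φ x_{L'} ≤ Φ x_L`.

`Φ` is sublinear, and it does not increase under one step of the lifted walk `M̂`: because every
constraint is a permutation, summing `M̂ ((u, c), (v, b))` over either label gives the same
vertex-walk entry `P u v`, so `Φ (x M̂) ≤ ∑ u, (max_c x (u, c)) ∑ v P u v = Φ x`.

The row `x_L` is the fixed point of `x = (1 - λ) e + λ x M̂`. With `c = (1 - λ') / (1 - λ)`, the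
difference `w = x_{L'} - c x_L` satisfies `w = c (λ' - λ) x_L M̂ + λ' w M̂`, hence
`(1 - λ') Φ w ≤ c (λ' - λ) Φ x_L`, and `Φ x_{L'} ≤ c Φ x_L + Φ w ≤ Φ x_L`.
-/

open Finset Matrix

namespace Matrix

variable {n : Type*} [Fintype n] [DecidableEq n] {M : Matrix n n ℝ}

theorem summable_geometric_mul_pow_apply (hM : M ∈ rowStochastic ℝ n) {l : ℝ} (hl0 : 0 ≤ l)
    (hl1 : l < 1) (i j : n) : Summable fun t : ℕ => l ^ t * (M ^ t) i j :=
  (summable_geometric_of_lt_one hl0 hl1).of_nonneg_of_le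
    (fun t => mul_nonneg (pow_nonneg hl0 t) (nonneg_of_mem_rowStochastic (pow_mem hM t)))
    (fun t => mul_le_of_le_one_right (pow_nonneg hl0 t)
      (le_one_of_mem_rowStochastic (pow_mem hM t)))

theorem tsum_geometric_pow_apply_eq (hM : M ∈ rowStochastic ℝ n) (z : ℝ) {l : ℝ} (hl0 : 0 ≤ l)
    (hl1 : l < 1) (i : n) :
    (fun j => ∑' t : ℕ, z * l ^ t * (M ^ t) i j) =
      z • (1 : Matrix n n ℝ) i + l • ((fun j => ∑' t : ℕ, z * l ^ t * (M ^ t) i j) ᵥ* M) := by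
  have hs k j : Summable fun t : ℕ => z * l ^ t * (M ^ t) k j := by
    simpa only [mul_assoc] using (summable_geometric_mul_pow_apply hM hl0 hl1 k j).mul_left z
  ext j
  rw [(hs i j).tsum_eq_zero_add]
  simp only [vecMul, dotProduct, Pi.add_apply, Pi.smul_apply, smul_eq_mul, pow_zero, mul_one,
    mul_sum, ← tsum_mul_right, ← tsum_mul_left]
  rw [← Summable.tsum_finsetSum fun k _ => ((hs i k).mul_right _).mul_left _]
  congr 1
  refine tsum_congr fun t => ?_
  rw [pow_succ, pow_succ, mul_apply, mul_sum]
  exact sum_congr rfl fun k _ => by ring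

theorem sum_eq_one_of_eq_smul_add_smul_vecMul (hM : M ∈ rowStochastic ℝ n) {l : ℝ} (hl : l ≠ 1)
    {i : n} {x : n → ℝ} (hx : x = (1 - l) • (1 : Matrix n n ℝ) i + l • (x ᵥ* M)) :
    ∑ j, x j = 1 := by
  have h : x ⬝ᵥ 1 = (1 - l) + l * (x ⬝ᵥ 1) := by
    conv_lhs => rw [hx]
    rw [add_dotProduct, smul_dotProduct, smul_dotProduct, ← dotProduct_mulVec, hM.2]
    simp [dotProduct, one_apply]
  have : (1 - l) * (x ⬝ᵥ 1) = (1 - l) * 1 := by linarith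
  simpa [dotProduct] using mul_left_cancel₀ (sub_ne_zero.mpr hl.symm) this

end Matrix

theorem resolvent_sublinear_antitone {X : Type*} [AddCommGroup X] [Module ℝ X] {Φ : X → ℝ}
    (hΦadd : ∀ x y, Φ (x + y) ≤ Φ x + Φ y) (hΦsmul : ∀ (c : ℝ) x, 0 ≤ c → Φ (c • x) = c * Φ x)
    {T : X →ₗ[ℝ] X} (hT : ∀ x, Φ (T x) ≤ Φ x) {e x y : X} {l l' : ℝ} (hl' : 0 ≤ l')
    (hll' : l ≤ l') (hl'1 : l' < 1) (hx : x = (1 - l) • e + l • T x)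
    (hy : y = (1 - l') • e + l' • T y) : Φ y ≤ Φ x := by
  set c := (1 - l') / (1 - l)
  have hc : c * (1 - l) = 1 - l' := div_mul_cancel₀ _ (by linarith)
  have hc0 : 0 ≤ c := div_nonneg (by linarith) (by linarith)
  have hcl : 0 ≤ c * (l' - l) := mul_nonneg hc0 (by linarith)
  set w := y - c • x
  have hw : w = (c * (l' - l)) • T x + l' • T w := by
    simp only [w, map_sub, map_smul]
    linear_combination (norm := module) hy - c • hx - hc • e
  have hΦw : Φ w ≤ c * (l' - l) * Φ x + l' * Φ w := calc
    Φ w ≤ Φ ((c * (l' - l)) • T x) + Φ (l' • T w) := (congrArg Φ hw).trans_le (hΦadd _ _)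
    _ ≤ c * (l' - l) * Φ x + l' * Φ w := by
      rw [hΦsmul _ _ hcl, hΦsmul _ _ hl']
      exact add_le_add (mul_le_mul_of_nonneg_left (hT x) hcl)
        (mul_le_mul_of_nonneg_left (hT w) hl')
  have hΦy : Φ y ≤ c * Φ x + Φ w := by
    simpa [w, hΦsmul c x hc0] using hΦadd (c • x) w
  refine le_of_mul_le_mul_left ?_ (sub_pos.mpr hl'1)
  linear_combination (1 - l') * hΦy + hΦw + Φ x * hc

def fiberSupSum {V κ : Type*} [Fintype V] (x : V × κ → ℝ) : ℝ :=
  ∑ v, ⨆ b, x (v, b)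

section fiberSupSum

variable {V κ : Type*}

theorem le_iSup_fiber [Finite κ] (x : V × κ → ℝ) (v : V) (b : κ) : x (v, b) ≤ ⨆ c, x (v, c) :=
  le_ciSup (f := fun c => x (v, c)) (Set.finite_range _).bddAbove b

variable [Fintype V]

theorem fiberSupSum_add_le [Finite κ] [Nonempty κ] (x y : V × κ → ℝ) :
    fiberSupSum (x + y) ≤ fiberSupSum x + fiberSupSum y := by
  simp only [fiberSupSum, ← sum_add_distrib]
  exact sum_le_sum fun v _ =>
    ciSup_le fun b => add_le_add (le_iSup_fiber x v b) (le_iSup_fiber y v b)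

theorem fiberSupSum_smul {c : ℝ} (hc : 0 ≤ c) (x : V × κ → ℝ) :
    fiberSupSum (c • x) = c * fiberSupSum x := by
  simp only [fiberSupSum, mul_sum, Real.mul_iSup_of_nonneg hc, Pi.smul_apply, smul_eq_mul]

theorem fiberSupSum_vecMul_le [Fintype κ] [Nonempty κ] [DecidableEq V] [DecidableEq κ]
    {W : Matrix (V × κ) (V × κ) ℝ} (hW : W ∈ rowStochastic ℝ (V × κ))
    (hcol : ∀ u v b b', ∑ c, W (u, c) (v, b) = ∑ c, W (u, c) (v, b')) (x : V × κ → ℝ) :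
    fiberSupSum (x ᵥ* W) ≤ fiberSupSum x := by
  set S : V → ℝ := fun u => ⨆ c, x (u, c)
  set P : V → V → ℝ := fun u v => ∑ c, W (u, c) (v, Classical.arbitrary κ)
  have hP u v b : ∑ c, W (u, c) (v, b) = P u v := hcol u v b _
  have hPsum u : ∑ v, P u v = 1 := by
    have : (Fintype.card κ : ℝ) * ∑ v, P u v = Fintype.card κ * 1 := calc
      _ = ∑ b : κ, ∑ v, ∑ c, W (u, c) (v, b) := by simp [hP]
      _ = ∑ c : κ, ∑ v, ∑ b, W (u, c) (v, b) := by
        rw [sum_comm]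
        exact (sum_congr rfl fun v _ => sum_comm).trans sum_comm
      _ = _ := by simp [← Fintype.sum_prod_type', sum_row_of_mem_rowStochastic hW]
    exact mul_left_cancel₀ (by positivity) this
  have hentry v b : (x ᵥ* W) (v, b) ≤ ∑ u, S u * P u v := calc
    (x ᵥ* W) (v, b) = ∑ q, x q * W q (v, b) := rfl
    _ ≤ ∑ q, S q.1 * W q (v, b) := sum_le_sum fun q _ =>
      mul_le_mul_of_nonneg_right (le_iSup_fiber x q.1 q.2) (nonneg_of_mem_rowStochastic hW)
    _ = ∑ u, S u * P u v := by simp only [Fintype.sum_prod_type, ← mul_sum, hP]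
  calc fiberSupSum (x ᵥ* W) ≤ ∑ v, ∑ u, S u * P u v :=
        sum_le_sum fun v _ => ciSup_le (hentry v)
    _ = fiberSupSum x := by
      rw [sum_comm]
      simp only [← mul_sum, hPsum, mul_one, fiberSupSum, S]

end fiberSupSum

theorem Equiv.Perm.card_filter_apply_eq {α : Type*} [Fintype α] [DecidableEq α]
    (σ : Equiv.Perm α) (b : α) : #{c | σ c = b} = 1 := by
  simp only [← Equiv.eq_symm_apply, filter_eq', mem_univ, if_true, card_singleton]

theorem card_filter_and_or_and {α : Type*} [Fintype α] {P P' : Prop} [Decidable P] [Decidable P']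
    {f g : α → Prop} [DecidablePred f] [DecidablePred g] (h : ¬(P ∧ P')) (hf : #{x | f x} = 1)
    (hg : #{x | g x} = 1) :
    #{x | P ∧ f x ∨ P' ∧ g x} = (if P then 1 else 0) + (if P' then 1 else 0) := by
  by_cases hP : P <;> by_cases hP' : P' <;> simp_all

section ugWalk

variable {V E : Type} [DecidableEq V] {Q : ℕ} {fste snde : E → V} {perm : E → Equiv.Perm (Fin Q)}

-- An `abbrev`, so that the `Decidable` instances of the filter in `ugWalk` are found again and
-- `ugWalk_apply` holds by `rfl`.
variable (fste snde perm) in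
abbrev IsUgStep (e : E) (p q : V × Fin Q) : Prop :=
  (fste e = p.1 ∧ snde e = q.1 ∧ perm e p.2 = q.2) ∨
    (snde e = p.1 ∧ fste e = q.1 ∧ (perm e)⁻¹ p.2 = q.2)

theorem card_filter_isUgStep_src {e : E} (hne : fste e ≠ snde e) (u v : V) (b : Fin Q) :
    #{c | IsUgStep fste snde perm e (u, c) (v, b)} =
      (if fste e = u ∧ snde e = v then 1 else 0) + (if snde e = u ∧ fste e = v then 1 else 0) := by
  simp only [IsUgStep, ← and_assoc]
  exact card_filter_and_or_and (fun h => hne (h.1.1.trans h.2.1.symm))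
    ((perm e).card_filter_apply_eq _) ((perm e)⁻¹.card_filter_apply_eq _)

theorem card_filter_isUgStep_tgt {e : E} (hne : fste e ≠ snde e) (u v : V) (c : Fin Q) :
    #{b | IsUgStep fste snde perm e (u, c) (v, b)} =
      (if fste e = u ∧ snde e = v then 1 else 0) + (if snde e = u ∧ fste e = v then 1 else 0) := by
  simp only [IsUgStep, ← and_assoc]
  exact card_filter_and_or_and (fun h => hne (h.1.1.trans h.2.1.symm))
    (by simp [filter_eq]) (by simp [filter_eq])

variable [Fintype E]

variable (fste snde) in
def edgeMult (u v : V) : ℕ :=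
  #{e | fste e = u ∧ snde e = v} + #{e | snde e = u ∧ fste e = v}

variable (fste snde) in
def vertexWalk (u v : V) : ℝ :=
  (if v = u then (1 / 2 : ℝ) else 0) + (edgeMult fste snde u v : ℝ) / (2 * (mdeg fste snde u : ℝ))

theorem sum_card_filter_isUgStep_src (hne : ∀ e, fste e ≠ snde e) (u v : V) (b : Fin Q) :
    ∑ c, #{e | IsUgStep fste snde perm e (u, c) (v, b)} = edgeMult fste snde u v := by
  refine (sum_card_bipartiteAbove_eq_sum_card_bipartiteBelow
    (fun c e => IsUgStep fste snde perm e (u, c) (v, b)) (s := univ) (t := univ)).trans ?_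
  simp only [bipartiteBelow, card_filter_isUgStep_src (hne _), sum_add_distrib, edgeMult,
    card_filter]

theorem sum_card_filter_isUgStep_tgt (hne : ∀ e, fste e ≠ snde e) (u v : V) (c : Fin Q) :
    ∑ b, #{e | IsUgStep fste snde perm e (u, c) (v, b)} = edgeMult fste snde u v := by
  refine (sum_card_bipartiteAbove_eq_sum_card_bipartiteBelow
    (fun b e => IsUgStep fste snde perm e (u, c) (v, b)) (s := univ) (t := univ)).trans ?_
  simp only [bipartiteBelow, card_filter_isUgStep_tgt (hne _), sum_add_distrib, edgeMult,
    card_filter]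

variable [Fintype V]

theorem ugWalk_apply (p q : V × Fin Q) :
    ugWalk fste snde perm p q = (if q = p then (1 / 2 : ℝ) else 0) +
      (#{e | IsUgStep fste snde perm e p q} : ℝ) / (2 * (mdeg fste snde p.1 : ℝ)) :=
  rfl

theorem sum_ugWalk_src_label (hne : ∀ e, fste e ≠ snde e) (u v : V) (b : Fin Q) :
    ∑ c, ugWalk fste snde perm (u, c) (v, b) = vertexWalk fste snde u v := by
  simp only [ugWalk_apply, sum_add_distrib, ← sum_div, ← Nat.cast_sum,
    sum_card_filter_isUgStep_src hne, vertexWalk]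
  congr 1
  by_cases h : v = u <;> simp [Prod.ext_iff, h]

theorem sum_ugWalk_tgt_label (hne : ∀ e, fste e ≠ snde e) (u v : V) (c : Fin Q) :
    ∑ b, ugWalk fste snde perm (u, c) (v, b) = vertexWalk fste snde u v := by
  simp only [ugWalk_apply, sum_add_distrib, ← sum_div, ← Nat.cast_sum,
    sum_card_filter_isUgStep_tgt hne, vertexWalk]
  congr 1
  by_cases h : v = u <;> simp [Prod.ext_iff, h]

theorem sum_edgeMult (u : V) : ∑ v, edgeMult fste snde u v = mdeg fste snde u := by
  simp only [edgeMult, mdeg, sum_add_distrib,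
    card_eq_sum_card_fiberwise (f := snde) (s := {e | fste e = u}) (fun _ _ => mem_univ _),
    card_eq_sum_card_fiberwise (f := fste) (s := {e | snde e = u}) (fun _ _ => mem_univ _),
    filter_filter]

theorem sum_vertexWalk (hdeg : ∀ v, 0 < mdeg fste snde v) (u : V) :
    ∑ v, vertexWalk fste snde u v = 1 := by
  have hu : (0 : ℝ) < mdeg fste snde u := by exact_mod_cast hdeg u
  simp only [vertexWalk, sum_add_distrib, ← sum_div, ← Nat.cast_sum, sum_edgeMult]
  field_simp
  norm_num

theorem ugWalk_mem_rowStochastic (hne : ∀ e, fste e ≠ snde e)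
    (hdeg : ∀ v, 0 < mdeg fste snde v) :
    ugWalk fste snde perm ∈ rowStochastic ℝ (V × Fin Q) := by
  refine mem_rowStochastic_iff_sum.mpr ⟨fun p q => ?_, fun p => ?_⟩
  · rw [ugWalk_apply]
    positivity
  · rw [Fintype.sum_prod_type]
    simp only [sum_ugWalk_tgt_label hne, sum_vertexWalk hdeg]

end ugWalk

theorem div_add_one_lt_one {L : ℝ} (hL : 0 ≤ L) : L / (L + 1) < 1 :=
  (div_lt_one (by positivity)).mpr (lt_add_one L)

section ugPr

variable {V E : Type} [Fintype V] [Fintype E] [DecidableEq V] {Q : ℕ}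
  {fste snde : E → V} {perm : E → Equiv.Perm (Fin Q)}

theorem ugPr_eq_smul_add_smul_vecMul (hne : ∀ e, fste e ≠ snde e)
    (hdeg : ∀ v, 0 < mdeg fste snde v) {L : ℝ} (hL : 0 ≤ L) (p : V × Fin Q) :
    ugPr fste snde perm L p = (1 - L / (L + 1)) • (1 : Matrix (V × Fin Q) (V × Fin Q) ℝ) p +
      (L / (L + 1)) • (ugPr fste snde perm L p ᵥ* ugWalk fste snde perm) := by
  have h1 : 1 - L / (L + 1) = 1 / (L + 1) := by field_simp; ring
  rw [h1]
  exact tsum_geometric_pow_apply_eq (ugWalk_mem_rowStochastic hne hdeg) _ (by positivity)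
    (div_add_one_lt_one hL) p

theorem ugAmb_eq_one_sub_fiberSupSum (hne : ∀ e, fste e ≠ snde e)
    (hdeg : ∀ v, 0 < mdeg fste snde v) {L : ℝ} (hL : 0 ≤ L) (s : V) (a : Fin Q) :
    ugAmb fste snde perm L s a = 1 - fiberSupSum (ugPr fste snde perm L (s, a)) := by
  rw [ugAmb, sum_sub_distrib, fiberSupSum, ← Fintype.sum_prod_type',
    sum_eq_one_of_eq_smul_add_smul_vecMul (ugWalk_mem_rowStochastic hne hdeg)
      (div_add_one_lt_one hL).ne (ugPr_eq_smul_add_smul_vecMul hne hdeg hL _)]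

theorem fiberSupSum_ugPr_le_of_le (hne : ∀ e, fste e ≠ snde e)
    (hdeg : ∀ v, 0 < mdeg fste snde v) [Nonempty (Fin Q)] {L L' : ℝ} (hL : 0 ≤ L) (hLL' : L ≤ L')
    (p : V × Fin Q) :
    fiberSupSum (ugPr fste snde perm L' p) ≤ fiberSupSum (ugPr fste snde perm L p) := by
  have hL' : 0 ≤ L' := hL.trans hLL'
  refine resolvent_sublinear_antitone fiberSupSum_add_le (fun c x hc => fiberSupSum_smul hc x)
    (T := (ugWalk fste snde perm).vecMulLinear)
    (fiberSupSum_vecMul_le (ugWalk_mem_rowStochastic hne hdeg) ?_) (by positivity) ?_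
    (div_add_one_lt_one hL')
    (ugPr_eq_smul_add_smul_vecMul hne hdeg hL p) (ugPr_eq_smul_add_smul_vecMul hne hdeg hL' p)
  · intro u v b b'
    rw [sum_ugWalk_src_label hne, sum_ugWalk_src_label hne]
  · rw [div_le_div_iff₀ (by positivity) (by positivity)]
    linarith

end ugPr

/-- Monotonicity of ambiguity in the geometric scale: for `1 ≤ L ≤ L'`,
`Amb_{L'}(s,a) ≥ Amb_L(s,a)` for every seed and seed label, and hence
`μ^{UG}_{L'}(s) ≥ μ^{UG}_L(s)`. -/
theorem stmt14 (Q : ℕ) (V E : Type) [Fintype V] [Fintype E] [DecidableEq V]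
    (fste snde : E → V) (perm : E → Equiv.Perm (Fin Q))
    (hne : ∀ e, fste e ≠ snde e)
    (hdeg : ∀ v, 0 < mdeg fste snde v)
    (L L' : ℝ) (hL : 1 ≤ L) (hLL' : L ≤ L') :
    (∀ (s : V) (a : Fin Q),
        ugAmb fste snde perm L s a ≤ ugAmb fste snde perm L' s a) ∧
    ∀ s : V, ugMu fste snde perm L s ≤ ugMu fste snde perm L' s := by
  have hL0 : 0 ≤ L := zero_le_one.trans hL
  have hamb (s : V) (a : Fin Q) : ugAmb fste snde perm L s a ≤ ugAmb fste snde perm L' s a := by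
    have : Nonempty (Fin Q) := ⟨a⟩
    rw [ugAmb_eq_one_sub_fiberSupSum hne hdeg hL0,
      ugAmb_eq_one_sub_fiberSupSum hne hdeg (hL0.trans hLL')]
    exact sub_le_sub_left (fiberSupSum_ugPr_le_of_le hne hdeg hL0 hLL' _) 1
  exact ⟨hamb, fun s => ciInf_mono (Set.finite_range _).bddBelow (hamb s)⟩
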